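/- arXiv:1403.3931 — 3 statements merged into one kernel-verified Lean document; each statement's English description precedes it below -/
import Mathlib

section
/- Let 0 < ε < 1/2 and let ω = ω(ε) be the unique positive solution of tanh ω = 2εω. Then there exists a constant C > 0 (independent of ε) such that |ω − 1/(2ε) + (1/ε)·e^{−1/ε}| ≤ (C/ε²)·e^{−2/ε} for all sufficiently small ε > 0. -/
/-!
With `a = 1/(2ε)` the equation `tanh ω = 2εω` reads `(a - ω) e^{2ω} = a + ω`. Comparing `e^{2ω}`
with its quadratic Taylor polynomial shows that the positive root lies in `(a - 1/2, a)`, so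
`δ = a - ω` is small and satisfies `δ = (2a - δ) e^{-2a} e^{2δ}`. Since `e^{2δ} = 1 + O(δ)`, this
gives `δ = O(a e^{-2a})` and then `δ = 2a e^{-2a} + O(a² e^{-4a})`, where `e^{-2a} = e^{-1/ε}`.
-/

open Real Set

theorem Real.one_sub_tanh_mul_exp_two_mul (x : ℝ) : (1 - tanh x) * exp (2 * x) = 1 + tanh x := by
  have hcosh : cosh x ≠ 0 := (cosh_pos x).ne'
  have hexp : exp (-x) * exp (2 * x) = exp x := by rw [← exp_add]; ring_nf
  rw [tanh_eq_sinh_div_cosh, one_sub_div hcosh, one_add_div hcosh, cosh_sub_sinh, cosh_add_sinh,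
    div_mul_eq_mul_div, hexp]

theorem sub_mul_exp_two_mul_eq_add_of_tanh_eq {a ω : ℝ} (ha : a ≠ 0) (h : tanh ω = ω / a) :
    (a - ω) * exp (2 * ω) = a + ω := by
  have hsub : a * (1 - tanh ω) = a - ω := by rw [h]; field_simp
  have hadd : a * (1 + tanh ω) = a + ω := by rw [h]; field_simp
  rw [← hsub, ← hadd, mul_assoc, one_sub_tanh_mul_exp_two_mul]

theorem mem_Ioo_of_sub_mul_exp_two_mul_eq_add {a ω : ℝ} (ha : 2 ≤ a) (hω : 0 < ω)
    (h : (a - ω) * exp (2 * ω) = a + ω) : ω ∈ Ioo (a - 1 / 2) a := by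
  constructor
  · by_contra! hω_le
    have hquad : (a - ω) * (1 + 2 * ω + (2 * ω) ^ 2 / 2) ≤ a + ω :=
      h ▸ mul_le_mul_of_nonneg_left (quadratic_le_exp_of_nonneg (by positivity)) (by linarith)
    nlinarith [mul_pos hω hω]
  · by_contra! ha_le
    nlinarith [exp_pos (2 * ω)]

theorem abs_two_mul_mul_exp_neg_sub_le {a δ : ℝ} (ha : 1 ≤ a) (hδ : δ ∈ Icc 0 (1 / 2))
    (h : δ * exp (2 * (a - δ)) = 2 * a - δ) :
    |2 * a * exp (-(2 * a)) - δ| ≤ 66 * a ^ 2 * exp (-(2 * a)) ^ 2 := by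
  obtain ⟨hδ₀, hδ₁⟩ := hδ
  set u := exp (-(2 * a))
  set w := exp (2 * δ)
  have hu : 0 < u := exp_pos _
  have hexp : exp (2 * (a - δ)) * (u * w) = 1 := by
    rw [← exp_add, ← exp_add, ← exp_zero]; ring_nf
  have hδ_eq : δ = (2 * a - δ) * u * w := by linear_combination (u * w) * h - δ * hexp
  have hw₁ : 1 ≤ w := one_le_exp (by linarith)
  have hw₃ : w ≤ 3 := (exp_le_exp.2 (by linarith : 2 * δ ≤ 1)).trans
    (by linarith [exp_one_lt_d9] : exp 1 ≤ 3)
  have hw_sub : w - 1 ≤ 4 * δ := by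
    have h2δ : |2 * δ| = 2 * δ := abs_of_nonneg (by linarith)
    have := abs_exp_sub_one_le (h2δ ▸ (by linarith : 2 * δ ≤ 1))
    linarith [le_abs_self (w - 1)]
  have hδ_le : δ ≤ 6 * a * u := by
    rw [hδ_eq]
    nlinarith [mul_le_mul_of_nonneg_left hw₃ hu.le]
  have hsplit : 2 * a * u - δ = δ * u * w - 2 * a * u * (w - 1) := by
    linear_combination -hδ_eq
  have hfirst : δ * u * w ≤ 18 * a * u ^ 2 := by
    nlinarith [mul_le_mul_of_nonneg_left hw₃ (mul_nonneg hδ₀ hu.le), mul_pos hu hu]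
  have hsecond : 2 * a * u * (w - 1) ≤ 48 * a ^ 2 * u ^ 2 := by
    nlinarith [mul_le_mul_of_nonneg_left hw_sub (by positivity : 0 ≤ 2 * a * u)]
  rw [hsplit, abs_le]
  constructor <;> nlinarith [mul_nonneg (mul_nonneg hδ₀ hu.le) (by linarith : 0 ≤ w),
    mul_nonneg (by positivity : 0 ≤ 2 * a * u) (by linarith : 0 ≤ w - 1), mul_pos hu hu]

theorem stmt_6 :
    ∃ C > (0:ℝ), ∃ ε₀ > (0:ℝ), ∀ ε : ℝ, 0 < ε → ε < 1 / 2 → ε < ε₀ →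
      ∀ ω : ℝ, 0 < ω → Real.tanh ω = 2 * ε * ω →
        |ω - 1 / (2 * ε) + (1 / ε) * Real.exp (-1 / ε)| ≤
          C / ε ^ 2 * Real.exp (-2 / ε) := by
  refine ⟨33 / 2, by norm_num, 1 / 4, by norm_num, fun ε hε _ hε₀ ω hω htanh => ?_⟩
  set a := 1 / (2 * ε) with ha_def
  have ha : 2 ≤ a := by rw [ha_def, le_div_iff₀ (by positivity)]; linarith
  have heq : (a - ω) * exp (2 * ω) = a + ω :=
    sub_mul_exp_two_mul_eq_add_of_tanh_eq (by positivity) (by rw [htanh, ha_def]; field_simp)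
  obtain ⟨hω_gt, hω_lt⟩ := mem_Ioo_of_sub_mul_exp_two_mul_eq_add ha hω heq
  have hbound := abs_two_mul_mul_exp_neg_sub_le (a := a) (δ := a - ω) (by linarith)
    ⟨by linarith, by linarith⟩ (by rw [sub_sub_cancel]; linarith)
  have hexp : exp (-2 / ε) = exp (-(2 * a)) ^ 2 := by
    rw [← exp_nat_mul, ha_def]; congr 1; field_simp; ring
  rw [hexp]
  convert hbound using 2
  · rw [ha_def]; field_simp; ring
  · rw [ha_def]; field_simp; ring
end

section
/- Fix 0 < ε < 1/2 and let ω = ω(ε) > 0 solve tanh ω = 2εω. Define A⁰ = [ (1 − e^{−4ω})/(2ω) − 2e^{−2ω} ]^{−1} (1 − e^{−2ω})² (ω + 1/(2ε))^{−1} e^{ω − 1/(2ε)}. Then there exists a constant C̃ > 0 such that |A⁰ − 1| ≤ (C̃/ε) e^{−1/ε} for all sufficiently small ε. -/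
/-!
With `q = exp (-2ω)` the root equation reads `2εω (1 + q) = 1 - q`. Eliminating `ω` turns `A⁰`
into an explicit function of `q` and `u = q / ε`, whose distance from `1` is `O(u)`. Bootstrapping
the root equation gives first `q ≤ 2ε` and then `2ω ≥ 1/ε - 4`, i.e. `q ≤ e⁴ e^{-1/ε}`.
-/

open Real

lemma Real.tanh_eq_one_sub_exp_div (x : ℝ) :
    tanh x = (1 - exp (-(2 * x))) / (1 + exp (-(2 * x))) := by
  have h : exp (-(2 * x)) = exp (-x) ^ 2 := by rw [← exp_nat_mul]; ring_nf
  rw [tanh_eq_sinh_div_cosh, sinh_eq, cosh_eq, h, exp_neg]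
  field_simp

lemma two_mul_mul_one_add_exp_eq_of_tanh_eq {ε ω : ℝ} (h : tanh ω = 2 * ε * ω) :
    2 * ε * ω * (1 + exp (-(2 * ω))) = 1 - exp (-(2 * ω)) := by
  rw [← h, tanh_eq_one_sub_exp_div, div_mul_cancel₀ _ (by positivity)]

lemma exp_neg_two_mul_le_of_tanh_eq {ε ω : ℝ} (hε : 0 < ε) (hω : 0 < ω)
    (h : tanh ω = 2 * ε * ω) : exp (-(2 * ω)) ≤ 2 * ε := by
  have hroot := two_mul_mul_one_add_exp_eq_of_tanh_eq h
  set q := exp (-(2 * ω)) with hq_def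
  have hq1 : q < 1 := exp_lt_one_iff.2 (by linarith)
  have hq : q * (1 + 2 * ω) ≤ 1 :=
    calc q * (1 + 2 * ω) ≤ q * exp (2 * ω) := by gcongr; linarith [add_one_le_exp (2 * ω)]
      _ = 1 := by rw [hq_def, ← exp_add]; simp
  have h4 : 1 - q ≤ 4 * ε * ω := by nlinarith [mul_pos hε hω]
  have h2 : q * (1 - q) ≤ 2 * ε * (1 - q) := by nlinarith [exp_pos (-(2 * ω))]
  exact le_of_mul_le_mul_right h2 (by linarith)

lemma exp_neg_two_mul_le_exp_four_mul_exp_of_tanh_eq {ε ω : ℝ} (hε : 0 < ε) (hω : 0 < ω)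
    (h : tanh ω = 2 * ε * ω) : exp (-(2 * ω)) ≤ exp 4 * exp (-1 / ε) := by
  have hroot := two_mul_mul_one_add_exp_eq_of_tanh_eq h
  have hq := exp_neg_two_mul_le_of_tanh_eq hε hω h
  set q := exp (-(2 * ω))
  have h2ω : 1 - 2 * q ≤ 2 * ε * ω := by nlinarith [exp_pos (-(2 * ω))]
  have : 1 / ε ≤ 2 * ω + 4 := by rw [div_le_iff₀ hε]; linarith
  rw [← exp_add, neg_div]
  exact exp_le_exp.2 (by linarith)

lemma exp_neg_inv_le {x : ℝ} (hx : 0 < x) : exp (-1 / x) ≤ 2 * x ^ 2 := by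
  have := quadratic_le_exp_of_nonneg (inv_pos.2 hx).le
  rw [neg_div, one_div, exp_neg, inv_le_comm₀ (exp_pos _) (by positivity)]
  calc (2 * x ^ 2)⁻¹ = (x⁻¹) ^ 2 / 2 := by field_simp
    _ ≤ exp x⁻¹ := by nlinarith [inv_pos.2 hx]

noncomputable def A0Form (q u : ℝ) : ℝ :=
  (1 - q) ^ 2 * (1 + q) * exp (-(u / (1 + q))) / ((1 + q) ^ 2 - 2 * u)

lemma A0_eq_A0Form_of_tanh_eq {ε ω : ℝ} (hε : 0 < ε) (hω : 0 < ω) (h : tanh ω = 2 * ε * ω) :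
    ((1 - exp (-(4 * ω))) / (2 * ω) - 2 * exp (-(2 * ω)))⁻¹ *
        (1 - exp (-(2 * ω))) ^ 2 * (ω + 1 / (2 * ε))⁻¹ * exp (ω - 1 / (2 * ε)) =
      A0Form (exp (-(2 * ω))) (exp (-(2 * ω)) / ε) := by
  have hroot := two_mul_mul_one_add_exp_eq_of_tanh_eq h
  have hq4 : exp (-(4 * ω)) = exp (-(2 * ω)) ^ 2 := by rw [← exp_nat_mul]; ring_nf
  rw [hq4]
  set q := exp (-(2 * ω))
  have hq0 : 0 < q := exp_pos _
  have hq1 : q < 1 := exp_lt_one_iff.2 (by linarith)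
  have hω_eq : ω = (1 - q) / (2 * ε * (1 + q)) := by
    rw [eq_div_iff (by positivity)]; linarith
  have hq1' : 1 - q ≠ 0 := (sub_pos.2 hq1).ne'
  have h1 : (1 - q ^ 2) / (2 * ω) = ε * (1 + q) ^ 2 := by
    rw [hω_eq]; field_simp; ring
  have h2 : ω + 1 / (2 * ε) = (ε * (1 + q))⁻¹ := by
    rw [hω_eq]; field_simp; ring
  have h3 : ω - 1 / (2 * ε) = -(q / ε / (1 + q)) := by
    rw [hω_eq]; field_simp; ring
  have h4 : (1 + q) ^ 2 - 2 * (q / ε) = (ε * (1 + q) ^ 2 - 2 * q) / ε := by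
    field_simp
  rw [A0Form, h1, h2, h3, h4, inv_inv, div_div_eq_mul_div]
  ring

lemma abs_A0Form_sub_one_le {q u : ℝ} (hq : 0 ≤ q) (hqu : q ≤ u) (hu : u ≤ 1 / 4) :
    |A0Form q u - 1| ≤ 10 * u := by
  unfold A0Form
  set E := exp (-(u / (1 + q)))
  have hE_le : E ≤ 1 := exp_le_one_iff.2 (neg_nonpos.2 (div_nonneg (by linarith) (by linarith)))
  have hE_ge : 1 - u ≤ E :=
    calc 1 - u ≤ 1 - u / (1 + q) := by gcongr; exact div_le_self (by linarith) (by linarith)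
      _ ≤ E := by linarith [add_one_le_exp (-(u / (1 + q)))]
  have hD : 1 / 2 ≤ (1 + q) ^ 2 - 2 * u := by nlinarith
  have hD0 : 0 < (1 + q) ^ 2 - 2 * u := by linarith
  have hc : 0 ≤ (1 - q) ^ 2 * (1 + q) := by positivity
  have hN_le := mul_le_mul_of_nonneg_left hE_le hc
  have hN_ge := mul_le_mul_of_nonneg_left hE_ge hc
  rw [div_sub_one hD0.ne', abs_div, abs_of_pos hD0, div_le_iff₀ hD0, abs_le]
  constructor <;> nlinarith [mul_nonneg hq hq, mul_nonneg (mul_nonneg hq hq) hq]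

theorem stmt_13 :
    ∃ C > (0:ℝ), ∃ ε₀ > (0:ℝ), ∀ ε : ℝ, 0 < ε → ε < 1 / 2 → ε < ε₀ →
      ∀ ω : ℝ, 0 < ω → Real.tanh ω = 2 * ε * ω →
        |((1 - Real.exp (-(4 * ω))) / (2 * ω) - 2 * Real.exp (-(2 * ω)))⁻¹ *
            (1 - Real.exp (-(2 * ω))) ^ 2 * (ω + 1 / (2 * ε))⁻¹ *
            Real.exp (ω - 1 / (2 * ε)) - 1| ≤
          C / ε * Real.exp (-1 / ε) := by
  refine ⟨10 * exp 4, by positivity, (8 * exp 4)⁻¹, by positivity, ?_⟩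
  intro ε hε _ hε₀ ω hω h
  rw [A0_eq_A0Form_of_tanh_eq hε hω h]
  have hq := exp_neg_two_mul_le_exp_four_mul_exp_of_tanh_eq hε hω h
  set q := exp (-(2 * ω))
  have hq0 : 0 ≤ q := (exp_pos _).le
  have hε₀' : ε * (8 * exp 4) < 1 := by
    have := mul_lt_mul_of_pos_right hε₀ (by positivity : 0 < 8 * exp 4)
    rwa [inv_mul_cancel₀ (by positivity)] at this
  have hu : q / ε ≤ 1 / 4 := by
    rw [div_le_iff₀ hε]
    calc q ≤ exp 4 * (2 * ε ^ 2) := hq.trans (by gcongr; exact exp_neg_inv_le hε)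
      _ ≤ 1 / 4 * ε := by nlinarith
  have hqu : q ≤ q / ε := le_div_self hq0 hε (by linarith)
  calc _ ≤ 10 * (q / ε) := abs_A0Form_sub_one_le hq0 hqu hu
    _ ≤ 10 * (exp 4 * exp (-1 / ε) / ε) := by gcongr
    _ = 10 * exp 4 / ε * exp (-1 / ε) := by ring
end

section
/- Let u : [0,1] → ℝ be twice continuously differentiable with u(1) = 0 and u(0)/(2ε) + u′(0) = 0, where 0 < ε < 1/2. If −u″ = λ u for some λ ∈ ℝ and u is not identically zero, then either λ = −ω² for the unique positive root ω of tanh ω = 2εω (a positive eigenvalue ω² of d²/dx²), or λ = ω_n² > 0 where ω_n solves tan ω_n = 2εω_n; in particular, d²/dx² with these boundary conditions has exactly one positive eigenvalue, namely ω² with tanh ω = 2εω. -/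
/-! The Wronskian of two solutions of `y'' = q y` is constant, so every solution of
`-u'' = λ u` is `u(0) c + u'(0) s` for the fundamental pair `c, s` normalised at `0`.
The Robin condition gives `u(0) = -2ε u'(0)` with `u'(0) ≠ 0`, and then `u(1) = 0` becomes
`s(1) = 2ε c(1)`.  With `c, s = cosh (ωx), sinh (ωx) / ω` for `λ = -ω²`, `1, x` for `λ = 0`
and `cos (ωx), sin (ωx) / ω` for `λ = ω²`, this reads `tanh ω = 2εω`, `1 = 2ε` and
`tan ω = 2εω` respectively. -/

open Set Real

section Wronskian

variable {q f f' g g' : ℝ → ℝ} {a b : ℝ}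

theorem wronskian_eq_of_hasDerivAt
    (hf : ∀ x ∈ Icc a b, HasDerivAt f (f' x) x)
    (hf' : ∀ x ∈ Icc a b, HasDerivAt f' (q x * f x) x)
    (hg : ∀ x ∈ Icc a b, HasDerivAt g (g' x) x)
    (hg' : ∀ x ∈ Icc a b, HasDerivAt g' (q x * g x) x) :
    ∀ x ∈ Icc a b, f x * g' x - f' x * g x = f a * g' a - f' a * g a := by
  have hW : ∀ x ∈ Icc a b, HasDerivAt (fun x => f x * g' x - f' x * g x) 0 x := fun x hx =>
    (((hf x hx).mul (hg' x hx)).sub ((hf' x hx).mul (hg x hx))).congr_deriv (by ring)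
  exact constant_of_has_deriv_right_zero
    (fun x hx => (hW x hx).continuousAt.continuousWithinAt)
    fun x hx => (hW x (Ico_subset_Icc_self hx)).hasDerivWithinAt

theorem eq_add_of_fundamental_pair {u u' c c' s s' : ℝ → ℝ}
    (hu : ∀ x ∈ Icc a b, HasDerivAt u (u' x) x)
    (hu' : ∀ x ∈ Icc a b, HasDerivAt u' (q x * u x) x)
    (hc : ∀ x ∈ Icc a b, HasDerivAt c (c' x) x)
    (hc' : ∀ x ∈ Icc a b, HasDerivAt c' (q x * c x) x)
    (hs : ∀ x ∈ Icc a b, HasDerivAt s (s' x) x)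
    (hs' : ∀ x ∈ Icc a b, HasDerivAt s' (q x * s x) x)
    (hca : c a = 1) (hc'a : c' a = 0) (hsa : s a = 0) (hs'a : s' a = 1) :
    ∀ x ∈ Icc a b, u x = u a * c x + u' a * s x := by
  intro x hx
  have hcs := wronskian_eq_of_hasDerivAt hc hc' hs hs' x hx
  have hus := wronskian_eq_of_hasDerivAt hu hu' hs hs' x hx
  have hcu := wronskian_eq_of_hasDerivAt hc hc' hu hu' x hx
  simp only [hca, hc'a, hsa, hs'a, mul_one, mul_zero, one_mul, zero_mul, sub_zero] at hcs hus hcu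
  linear_combination (-u x) * hcs + c x * hus + s x * hcu

end Wronskian

theorem hasDerivAt_cosh_mul (ω x : ℝ) :
    HasDerivAt (fun x => cosh (ω * x)) (ω * sinh (ω * x)) x :=
  (((hasDerivAt_id x).const_mul ω).cosh).congr_deriv (by simp [mul_comm])

theorem hasDerivAt_sinh_mul (ω x : ℝ) :
    HasDerivAt (fun x => sinh (ω * x)) (ω * cosh (ω * x)) x :=
  (((hasDerivAt_id x).const_mul ω).sinh).congr_deriv (by simp [mul_comm])

theorem hasDerivAt_cos_mul (ω x : ℝ) :
    HasDerivAt (fun x => cos (ω * x)) (-(ω * sin (ω * x))) x :=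
  (((hasDerivAt_id x).const_mul ω).cos).congr_deriv (by simp [mul_comm])

theorem hasDerivAt_sin_mul (ω x : ℝ) :
    HasDerivAt (fun x => sin (ω * x)) (ω * cos (ω * x)) x :=
  (((hasDerivAt_id x).const_mul ω).sin).congr_deriv (by simp [mul_comm])

structure IsRobinEigenfunction (ε lam : ℝ) (u : ℝ → ℝ) : Prop where
  hasDerivAt : ∀ x ∈ Icc (0 : ℝ) 1, HasDerivAt u (deriv u x) x
  hasDerivAt_deriv : ∀ x ∈ Icc (0 : ℝ) 1, HasDerivAt (deriv u) (-lam * u x) x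
  apply_one : u 1 = 0
  robin_zero : u 0 / (2 * ε) + deriv u 0 = 0
  exists_ne_zero : ∃ x ∈ Icc (0 : ℝ) 1, u x ≠ 0

namespace IsRobinEigenfunction

variable {ε lam : ℝ} {u : ℝ → ℝ}

theorem of_contDiff (hu : ContDiff ℝ 2 u) (hbc1 : u 1 = 0)
    (hbc0 : u 0 / (2 * ε) + deriv u 0 = 0)
    (heig : ∀ x ∈ Icc (0 : ℝ) 1, -(deriv (deriv u) x) = lam * u x)
    (hne : ∃ x ∈ Icc (0 : ℝ) 1, u x ≠ 0) : IsRobinEigenfunction ε lam u where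
  hasDerivAt x _ := (hu.differentiable two_ne_zero x).hasDerivAt
  hasDerivAt_deriv x hx :=
    ((hu.deriv' (n := 1)).differentiable one_ne_zero x).hasDerivAt.congr_deriv
      (by linarith [heig x hx])
  apply_one := hbc1
  robin_zero := hbc0
  exists_ne_zero := hne

theorem fundamental_pair_relation (h : IsRobinEigenfunction ε lam u) (hε : ε ≠ 0)
    {c c' s s' : ℝ → ℝ}
    (hc : ∀ x ∈ Icc (0 : ℝ) 1, HasDerivAt c (c' x) x)
    (hc' : ∀ x ∈ Icc (0 : ℝ) 1, HasDerivAt c' (-lam * c x) x)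
    (hs : ∀ x ∈ Icc (0 : ℝ) 1, HasDerivAt s (s' x) x)
    (hs' : ∀ x ∈ Icc (0 : ℝ) 1, HasDerivAt s' (-lam * s x) x)
    (hc0 : c 0 = 1) (hc'0 : c' 0 = 0) (hs0 : s 0 = 0) (hs'0 : s' 0 = 1) :
    s 1 = 2 * ε * c 1 := by
  have rep := eq_add_of_fundamental_pair (q := fun _ => -lam)
    h.hasDerivAt h.hasDerivAt_deriv hc hc' hs hs' hc0 hc'0 hs0 hs'0
  have hu0 : u 0 = -(2 * ε) * deriv u 0 := by
    have := h.robin_zero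
    field_simp at this
    linarith
  have hu'0 : deriv u 0 ≠ 0 := by
    intro hzero
    obtain ⟨x, hx, hux⟩ := h.exists_ne_zero
    exact hux (by rw [rep x hx, hu0, hzero]; ring)
  have hu1 : deriv u 0 * (s 1 - 2 * ε * c 1) = 0 := by
    linear_combination -(rep 1 (right_mem_Icc.2 zero_le_one)) + h.apply_one
      - c 1 * hu0
  linarith [(mul_eq_zero.1 hu1).resolve_left hu'0]

theorem exists_tanh_eq_of_neg (h : IsRobinEigenfunction ε lam u) (hε : ε ≠ 0)
    (hlam : lam < 0) : ∃ ω : ℝ, 0 < ω ∧ tanh ω = 2 * ε * ω ∧ lam = -(ω ^ 2) := by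
  set ω := √(-lam)
  have hω : 0 < ω := sqrt_pos.2 (neg_pos.2 hlam)
  have hω2 : ω ^ 2 = -lam := sq_sqrt (neg_nonneg.2 hlam.le)
  have hrel := h.fundamental_pair_relation hε (c := fun x => cosh (ω * x))
    (c' := fun x => ω * sinh (ω * x)) (s := fun x => sinh (ω * x) / ω)
    (s' := fun x => cosh (ω * x))
    (fun x _ => hasDerivAt_cosh_mul ω x)
    (fun x _ => ((hasDerivAt_sinh_mul ω x).const_mul ω).congr_deriv (by rw [← hω2]; ring))
    (fun x _ => ((hasDerivAt_sinh_mul ω x).div_const ω).congr_deriv (by field_simp))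
    (fun x _ => (hasDerivAt_cosh_mul ω x).congr_deriv (by rw [← hω2]; field_simp))
    (by simp) (by simp) (by simp) (by simp)
  simp only [mul_one] at hrel
  rw [div_eq_iff hω.ne'] at hrel
  refine ⟨ω, hω, ?_, by linarith⟩
  rw [tanh_eq_sinh_div_cosh, div_eq_iff (cosh_pos ω).ne', hrel]
  ring

theorem eq_half_of_eigenvalue_zero (h : IsRobinEigenfunction ε 0 u) (hε : ε ≠ 0) :
    ε = 1 / 2 := by
  have hrel := h.fundamental_pair_relation hε (c := fun _ => 1) (c' := fun _ => 0)
    (s := id) (s' := fun _ => 1)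
    (fun x _ => hasDerivAt_const x 1) (fun x _ => (hasDerivAt_const x 0).congr_deriv (by ring))
    (fun x _ => hasDerivAt_id x) (fun x _ => (hasDerivAt_const x 1).congr_deriv (by ring))
    rfl rfl rfl rfl
  simp only [id, mul_one] at hrel
  linarith

theorem exists_tan_eq_of_pos (h : IsRobinEigenfunction ε lam u) (hε : ε ≠ 0)
    (hlam : 0 < lam) : ∃ ω : ℝ, 0 < ω ∧ tan ω = 2 * ε * ω ∧ lam = ω ^ 2 := by
  set ω := √lam
  have hω : 0 < ω := sqrt_pos.2 hlam
  have hω2 : ω ^ 2 = lam := sq_sqrt hlam.le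
  have hrel := h.fundamental_pair_relation hε (c := fun x => cos (ω * x))
    (c' := fun x => -(ω * sin (ω * x))) (s := fun x => sin (ω * x) / ω)
    (s' := fun x => cos (ω * x))
    (fun x _ => hasDerivAt_cos_mul ω x)
    (fun x _ => ((hasDerivAt_sin_mul ω x).const_mul ω).neg.congr_deriv (by rw [← hω2]; ring))
    (fun x _ => ((hasDerivAt_sin_mul ω x).div_const ω).congr_deriv (by field_simp))
    (fun x _ => (hasDerivAt_cos_mul ω x).congr_deriv (by rw [← hω2]; field_simp))
    (by simp) (by simp) (by simp) (by simp)
  simp only [mul_one] at hrel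
  rw [div_eq_iff hω.ne'] at hrel
  -- `cos ω = 0` would force `sin ω = 0` as well
  have hcos : cos ω ≠ 0 := fun hcos => by
    have := sin_sq_add_cos_sq ω
    simp_all
  refine ⟨ω, hω, ?_, hω2.symm⟩
  rw [tan_eq_sin_div_cos, div_eq_iff hcos, hrel]
  ring

end IsRobinEigenfunction

theorem stmt_15 (ε : ℝ) (hε : 0 < ε) (hε' : ε < 1 / 2)
    (u : ℝ → ℝ) (hu : ContDiff ℝ 2 u)
    (hbc1 : u 1 = 0) (hbc0 : u 0 / (2 * ε) + deriv u 0 = 0)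
    (lam : ℝ)
    (heig : ∀ x ∈ Set.Icc (0:ℝ) 1, -(deriv (deriv u) x) = lam * u x)
    (hne : ∃ x ∈ Set.Icc (0:ℝ) 1, u x ≠ 0) :
    (∃ ω : ℝ, 0 < ω ∧ Real.tanh ω = 2 * ε * ω ∧ lam = -(ω ^ 2)) ∨
    (∃ ωn : ℝ, 0 < ωn ∧ Real.tan ωn = 2 * ε * ωn ∧ lam = ωn ^ 2) := by
  have h := IsRobinEigenfunction.of_contDiff hu hbc1 hbc0 heig hne
  rcases lt_trichotomy lam 0 with hlam | rfl | hlam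
  · exact .inl (h.exists_tanh_eq_of_neg hε.ne' hlam)
  · exact absurd (h.eq_half_of_eigenvalue_zero hε.ne') hε'.ne
  · exact .inr (h.exists_tan_eq_of_pos hε.ne' hlam)
end
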